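/- arXiv:2205.14645 — 2 statements merged into one kernel-verified Lean document; each statement's English description precedes it below -/
import Mathlib

section
/- Let T be a triangulation of the 2-sphere. If T admits a proper 3-coloring of its vertices (adjacent vertices get distinct colors from a 3-element set), then every vertex of T has even degree. -/
/-- A combinatorial triangulation of the 2-sphere: a finite set of triangular
faces such that every edge lies in exactly two faces, the faces cover the
vertex set, the 1-skeleton is connected, and Euler's formula `V - E + F = 2`
holds (which characterizes the sphere). -/
structure SphereTriangulation (V : Type*) [Fintype V] [DecidableEq V] where
  faces : Finset (Finset V)
  card_three : ∀ f ∈ faces, f.card = 3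
  edge_in_two_faces : ∀ e : Finset V, e.card = 2 → (∃ f ∈ faces, e ⊆ f) →
    (faces.filter fun f => e ⊆ f).card = 2
  covers : ∀ v : V, ∃ f ∈ faces, v ∈ f
  connected : (SimpleGraph.fromRel fun u v => ∃ f ∈ faces, u ∈ f ∧ v ∈ f).Connected
  euler : (Fintype.card V : ℤ) - (faces.biUnion fun f => f.powersetCard 2).card + faces.card = 2

/-- The degree of a vertex: the number of faces (equivalently, edges) containing it. -/
def SphereTriangulation.degree {V : Type*} [Fintype V] [DecidableEq V]
    (T : SphereTriangulation V) (v : V) : ℕ :=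
  (T.faces.filter fun f => v ∈ f).card

/-- A `ℤ/2`-coloring: the three vertex colors of every face sum to `0` mod `2`. -/
def SphereTriangulation.IsZ2Coloring {V : Type*} [Fintype V] [DecidableEq V]
    (T : SphereTriangulation V) (c : V → ZMod 2) : Prop :=
  ∀ f ∈ T.faces, ∑ v ∈ f, c v = 0

/-- If a sphere triangulation admits a proper 3-coloring of its vertices, then
every vertex has even degree. -/
theorem stmt7 {V : Type*} [Fintype V] [DecidableEq V] (T : SphereTriangulation V)
    (c : V → Fin 3)
    (hc : ∀ u v : V, u ≠ v → (∃ f ∈ T.faces, u ∈ f ∧ v ∈ f) → c u ≠ c v) :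
    ∀ v : V, Even (T.degree v) := by
  classical
  intro v
  set a : Fin 3 := c v + 1 with ha
  have hav : a ≠ c v := by
    have : ∀ x : Fin 3, x + 1 ≠ x := by decide
    simpa [ha] using this (c v)
  have hinj : ∀ f ∈ T.faces, ∀ x ∈ f, ∀ y ∈ f, c x = c y → x = y := by
    intro f hf x hx y hy hcc
    by_contra h
    exact hc x y h ⟨f, hf, hx, hy⟩ hcc
  have hsurj : ∀ f ∈ T.faces, ∃ x ∈ f, c x = a := by
    intro f hf
    have h3 := T.card_three f hf
    have himg : (f.image c).card = 3 := by
      rw [Finset.card_image_of_injOn, h3]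
      intro x hx y hy
      exact hinj f hf x hx y hy
    have huniv : f.image c = Finset.univ := Finset.eq_univ_of_card _ (by simp [himg])
    have : a ∈ f.image c := huniv ▸ Finset.mem_univ a
    simpa [eq_comm] using this
  set φ : Finset V → Finset V := fun f => f.filter (fun x => c x = a ∨ x = v) with hφ
  have hφeq : ∀ f ∈ T.faces, v ∈ f → ∃ x ∈ f, c x = a ∧ φ f = {v, x} := by
    intro f hf hv
    obtain ⟨x, hx, hxa⟩ := hsurj f hf
    refine ⟨x, hx, hxa, ?_⟩
    ext y
    simp only [hφ, Finset.mem_filter, Finset.mem_insert, Finset.mem_singleton]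
    constructor
    · rintro ⟨hyf, hy | hy⟩
      · exact Or.inr (hinj f hf y hyf x hx (hy.trans hxa.symm))
      · exact Or.inl hy
    · rintro (rfl | rfl)
      · exact ⟨hv, Or.inr rfl⟩
      · exact ⟨hx, Or.inl hxa⟩
  have hφcard : ∀ f ∈ T.faces, v ∈ f → (φ f).card = 2 := by
    intro f hf hv
    obtain ⟨x, hx, hxa, heq⟩ := hφeq f hf hv
    rw [heq, Finset.card_insert_of_notMem, Finset.card_singleton]
    simp only [Finset.mem_singleton]
    rintro rfl
    exact hav hxa.symm
  set S := T.faces.filter (fun f => v ∈ f) with hS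
  have hcount : S.card = ∑ e ∈ S.image φ, (S.filter fun f => φ f = e).card :=
    Finset.card_eq_sum_card_fiberwise (fun f hf => Finset.mem_image_of_mem φ hf)
  have hfib : ∀ e ∈ S.image φ, (S.filter fun f => φ f = e).card = 2 := by
    intro e he
    obtain ⟨f0, hf0, rfl⟩ := Finset.mem_image.mp he
    have hf0' := Finset.mem_filter.mp hf0
    have hecard : (φ f0).card = 2 := hφcard f0 hf0'.1 hf0'.2
    have hve : v ∈ φ f0 := Finset.mem_filter.mpr ⟨hf0'.2, Or.inr rfl⟩
    have hfil : S.filter (fun f => φ f = φ f0) = T.faces.filter (fun f => φ f0 ⊆ f) := by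
      ext f
      simp only [Finset.mem_filter, hS]
      constructor
      · rintro ⟨⟨hf, hvf⟩, hφf⟩
        exact ⟨hf, hφf ▸ Finset.filter_subset _ f⟩
      · rintro ⟨hf, hsub⟩
        have hvf : v ∈ f := hsub hve
        refine ⟨⟨hf, hvf⟩, ?_⟩
        have hsub2 : φ f0 ⊆ φ f := by
          intro y hy
          have hy' := Finset.mem_filter.mp hy
          exact Finset.mem_filter.mpr ⟨hsub hy, hy'.2⟩
        exact (Finset.eq_of_subset_of_card_le hsub2
          (by rw [hφcard f hf hvf, hecard])).symm
    rw [hfil]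
    exact T.edge_in_two_faces (φ f0) hecard ⟨f0, hf0'.1, Finset.filter_subset _ f0⟩
  have hdeg : T.degree v = ∑ e ∈ S.image φ, 2 := by
    rw [SphereTriangulation.degree, ← hS, hcount]
    exact Finset.sum_congr rfl hfib
  rw [hdeg, Finset.sum_const, smul_eq_mul]
  exact even_two.mul_left _
end

section
/- Let T be a triangulation of the 2-sphere that admits a nontrivial Z/2-coloring c (i.e., c is not identically zero and each face's three vertex colors sum to 0 mod 2). Then every vertex of odd degree receives color 0 under c. -/
/-- In a nontrivial `ℤ/2`-coloring of a sphere triangulation, every vertex of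
odd degree receives color `0`. -/
theorem stmt9 {V : Type*} [Fintype V] [DecidableEq V] (T : SphereTriangulation V)
    (c : V → ZMod 2) (hc : T.IsZ2Coloring c) (hne : c ≠ 0)
    (v : V) (hv : Odd (T.degree v)) :
    c v = 0 := by
  classical
  set S := T.faces.filter (fun f => v ∈ f) with hS
  have hsum0 : ∑ f ∈ S, ∑ w ∈ f, c w = 0 := by
    apply Finset.sum_eq_zero
    intro f hf
    exact hc f (Finset.mem_filter.mp hf).1
  have hsplit : ∀ f ∈ S, ∑ w ∈ f, c w = c v + ∑ w ∈ f.erase v, c w := by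
    intro f hf
    exact (Finset.add_sum_erase f c (Finset.mem_filter.mp hf).2).symm
  rw [Finset.sum_congr rfl hsplit, Finset.sum_add_distrib, Finset.sum_const] at hsum0
  have hlink : ∑ f ∈ S, ∑ w ∈ f.erase v, c w = 0 := by
    have h1 : ∑ f ∈ S, ∑ w ∈ f.erase v, c w
        = ∑ w : V, ∑ f ∈ S, (if w ∈ f.erase v then c w else 0) := by
      rw [Finset.sum_comm]
      apply Finset.sum_congr rfl
      intro f _
      rw [Finset.sum_ite_mem, Finset.univ_inter]
    rw [h1]
    apply Finset.sum_eq_zero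
    intro w _
    rw [← Finset.sum_filter, Finset.sum_const]
    have heven : Even ((S.filter (fun f => w ∈ f.erase v)).card) := by
      by_cases hwv : w = v
      · have : S.filter (fun f => w ∈ f.erase v) = ∅ := by
          apply Finset.filter_false_of_mem
          intro f _
          simp [hwv]
        rw [this, Finset.card_empty]
        exact Even.zero
      by_cases hex : ∃ f ∈ T.faces, ({v, w} : Finset V) ⊆ f
      · have hcard2 : ({v, w} : Finset V).card = 2 := by
          rw [Finset.card_insert_of_notMem (by simp [Ne.symm hwv]), Finset.card_singleton]
        have h2 := T.edge_in_two_faces {v, w} hcard2 hex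
        have heq : S.filter (fun f => w ∈ f.erase v)
            = T.faces.filter (fun f => ({v, w} : Finset V) ⊆ f) := by
          ext f
          simp only [hS, Finset.mem_filter, Finset.filter_filter, Finset.mem_erase,
            Finset.insert_subset_iff, Finset.singleton_subset_iff]
          tauto
        rw [heq, h2]
        exact even_two
      · have : S.filter (fun f => w ∈ f.erase v) = ∅ := by
          apply Finset.filter_false_of_mem
          intro f hf
          simp only [hS, Finset.mem_filter] at hf
          intro hw
          exact hex ⟨f, hf.1, by
            rw [Finset.insert_subset_iff, Finset.singleton_subset_iff]
            exact ⟨hf.2, (Finset.mem_erase.mp hw).2⟩⟩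
        rw [this, Finset.card_empty]
        exact Even.zero
    obtain ⟨k, hk⟩ := heven
    rw [hk, nsmul_eq_mul]
    have hz : ((k + k : ℕ) : ZMod 2) = 0 := by
      push_cast
      rw [← two_mul]
      have h2 : (2 : ZMod 2) = 0 := by decide
      rw [h2, zero_mul]
    rw [hz, zero_mul]
  rw [hlink, add_zero] at hsum0
  have hdeg : S.card = T.degree v := rfl
  obtain ⟨k, hk⟩ := hv
  rw [hdeg, hk] at hsum0
  rw [nsmul_eq_mul] at hsum0
  push_cast at hsum0
  have h2z : (2 : ZMod 2) = 0 := by decide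
  rw [h2z] at hsum0
  simpa using hsum0
end
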